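/- arXiv:1911.11713 — 4 statements merged into one kernel-verified Lean document; each statement's English description precedes it below -/
import Mathlib

section
/- Let p be a prime and let H be the bipartite graph with parts U = V = 𝔽_p², where u = (u_0, u_1) is adjacent to v = (v_0, v_1) if and only if v_0 = u_0 + u_1·v_1 in 𝔽_p. Then H contains no 4-cycle; equivalently, any two distinct vertices of U have at most one common neighbor in V. -/
/-- In the Wenger graph `H_2(p)` on parts `U = V = 𝔽_p²`, where
`(u₀,u₁)` is adjacent to `(v₀,v₁)` iff `v₀ = u₀ + u₁·v₁`, any two
distinct vertices of `U` have at most one common neighbor in `V`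
(i.e. the graph contains no 4-cycle). -/
theorem stmt_3 (p : ℕ) (hp : p.Prime)
    (u u' v v' : ZMod p × ZMod p) (huu' : u ≠ u')
    (h1 : v.1 = u.1 + u.2 * v.2) (h2 : v.1 = u'.1 + u'.2 * v.2)
    (h3 : v'.1 = u.1 + u.2 * v'.2) (h4 : v'.1 = u'.1 + u'.2 * v'.2) :
    v = v' := by
  haveI : Fact p.Prime := ⟨hp⟩
  have key : (u.2 - u'.2) * (v.2 - v'.2) = 0 := by
    have e1 : u.1 + u.2 * v.2 = u'.1 + u'.2 * v.2 := h1 ▸ h2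
    have e2 : u.1 + u.2 * v'.2 = u'.1 + u'.2 * v'.2 := h3 ▸ h4
    linear_combination e1 - e2
  rcases mul_eq_zero.mp key with h | h
  · exfalso
    have h2' : u.2 = u'.2 := sub_eq_zero.mp h
    exact huu' (Prod.ext (by linear_combination h2 - h1 - v.2 * h) h2')
  · have hv2 : v.2 = v'.2 := sub_eq_zero.mp h
    exact Prod.ext (by rw [h1, h3, hv2]) hv2
end

section
/- Let p be a prime and let H be the bipartite graph with parts U = V = 𝔽_p³, where u = (u_0, u_1, u_2) is adjacent to v = (v_0, v_1, v_2) if and only if v_0 = u_0 + u_1·v_2 and v_1 = u_1 + u_2·v_2 in 𝔽_p. Then H contains no 6-cycle. -/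
/-- The Wenger graph `H_3(p)` on parts `U = V = 𝔽_p³`, where
`(u₀,u₁,u₂)` is adjacent to `(v₀,v₁,v₂)` iff `v₀ = u₀ + u₁·v₂` and
`v₁ = u₁ + u₂·v₂`, contains no 6-cycle: there are no distinct
`u¹,u²,u³ ∈ U` and distinct `v¹,v²,v³ ∈ V` with `u¹ ~ v¹, v³`,
`u² ~ v¹, v²` and `u³ ~ v², v³`. -/
theorem stmt_4 (p : ℕ) (hp : p.Prime)
    (adj : (ZMod p × ZMod p × ZMod p) → (ZMod p × ZMod p × ZMod p) → Prop)
    (hadj : ∀ u v, adj u v ↔ (v.1 = u.1 + u.2.1 * v.2.2 ∧ v.2.1 = u.2.1 + u.2.2 * v.2.2))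
    (u1 u2 u3 v1 v2 v3 : ZMod p × ZMod p × ZMod p)
    (hu12 : u1 ≠ u2) (hu13 : u1 ≠ u3) (hu23 : u2 ≠ u3)
    (hv12 : v1 ≠ v2) (hv13 : v1 ≠ v3) (hv23 : v2 ≠ v3)
    (e1 : adj u1 v1) (e2 : adj u1 v3) (e3 : adj u2 v1)
    (e4 : adj u2 v2) (e5 : adj u3 v2) (e6 : adj u3 v3) :
    False := by
  haveI : Fact p.Prime := ⟨hp⟩
  rw [hadj] at e1 e2 e3 e4 e5 e6
  obtain ⟨e1a, e1b⟩ := e1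
  obtain ⟨e2a, e2b⟩ := e2
  obtain ⟨e3a, e3b⟩ := e3
  obtain ⟨e4a, e4b⟩ := e4
  obtain ⟨e5a, e5b⟩ := e5
  obtain ⟨e6a, e6b⟩ := e6
  set x := v1.2.2 with hx
  set y := v2.2.2 with hy
  set z := v3.2.2 with hz
  -- the three parameters are pairwise distinct
  have hxy : x ≠ y := by
    intro h
    exact hv12 (Prod.ext (by rw [e3a, e4a, h]) (Prod.ext (by rw [e3b, e4b, h]) h))
  have hyz : y ≠ z := by
    intro h
    exact hv23 (Prod.ext (by rw [e5a, e6a, h]) (Prod.ext (by rw [e5b, e6b, h]) h))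
  have hxz : x ≠ z := by
    intro h
    exact hv13 (Prod.ext (by rw [e1a, e2a, h]) (Prod.ext (by rw [e1b, e2b, h]) h))
  set A := u1.2.2 - u2.2.2 with hA
  set B := u2.2.2 - u3.2.2 with hB
  set C := u3.2.2 - u1.2.2 with hC
  have S0 : A + B + C = 0 := by ring
  have S1 : A * x + B * y + C * z = 0 := by
    linear_combination e3b - e1b + e5b - e4b + e2b - e6b
  have S2 : A * x ^ 2 + B * y ^ 2 + C * z ^ 2 = 0 := by
    linear_combination x * (e3b - e1b) + y * (e5b - e4b) + z * (e2b - e6b) -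
      (e3a - e1a) - (e5a - e4a) - (e2a - e6a)
  have hA0 : A = 0 := by
    have h : A * (x - z) * (x - y) = 0 := by
      linear_combination S2 - (y + z) * S1 + y * z * S0
    rcases mul_eq_zero.1 h with h' | h'
    · rcases mul_eq_zero.1 h' with h'' | h''
      · exact h''
      · exact absurd (sub_eq_zero.1 h'') hxz
    · exact absurd (sub_eq_zero.1 h') hxy
  have hB0 : B = 0 := by
    have h : B * (y - x) * (y - z) = 0 := by
      linear_combination S2 - (x + z) * S1 + x * z * S0
    rcases mul_eq_zero.1 h with h' | h'
    · rcases mul_eq_zero.1 h' with h'' | h''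
      · exact h''
      · exact absurd (sub_eq_zero.1 h'') hxy.symm
    · exact absurd (sub_eq_zero.1 h') hyz
  have h22 : u1.2.2 = u2.2.2 := by linear_combination hA0
  have h21 : u1.2.1 = u2.2.1 := by linear_combination e3b - e1b - x * hA0
  have h20 : u1.1 = u2.1 := by
    linear_combination e3a - e1a - x * (e3b - e1b) + x ^ 2 * hA0
  exact hu12 (Prod.ext h20 (Prod.ext h21 h22))
end

section
/- Let q be a prime and let D be the bipartite graph with parts U = V = 𝔽_q³, where u = (u_1, u_{11}, u_{12}) is adjacent to v = (v_1, v_{11}, v_{12}) if and only if v_{11} − u_{11} = v_1·u_1 and v_{12} − u_{12} = v_{11}·u_1 in 𝔽_q. Then D contains no 4-cycle. -/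
/-- The graph `D` on parts `U = V = 𝔽_q³`, where `(u₁,u₁₁,u₁₂)` is
adjacent to `(v₁,v₁₁,v₁₂)` iff `v₁₁ − u₁₁ = v₁·u₁` and
`v₁₂ − u₁₂ = v₁₁·u₁`, contains no 4-cycle: two distinct vertices of
`U` cannot have two distinct common neighbors in `V`. -/
theorem stmt_7 (q : ℕ) (hq : q.Prime)
    (u u' v v' : ZMod q × ZMod q × ZMod q) (huu' : u ≠ u') (hvv' : v ≠ v')
    (h1 : v.2.1 - u.2.1 = v.1 * u.1 ∧ v.2.2 - u.2.2 = v.2.1 * u.1)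
    (h2 : v.2.1 - u'.2.1 = v.1 * u'.1 ∧ v.2.2 - u'.2.2 = v.2.1 * u'.1)
    (h3 : v'.2.1 - u.2.1 = v'.1 * u.1 ∧ v'.2.2 - u.2.2 = v'.2.1 * u.1)
    (h4 : v'.2.1 - u'.2.1 = v'.1 * u'.1 ∧ v'.2.2 - u'.2.2 = v'.2.1 * u'.1) :
    False := by
  haveI : Fact q.Prime := ⟨hq⟩
  obtain ⟨h1a, h1b⟩ := h1
  obtain ⟨h2a, h2b⟩ := h2
  obtain ⟨h3a, h3b⟩ := h3
  obtain ⟨h4a, h4b⟩ := h4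
  by_cases h : u.1 = u'.1
  · apply huu'
    have e1 : u.2.1 = u'.2.1 := by
      linear_combination h2a - h1a - v.1 * h
    have e2 : u.2.2 = u'.2.2 := by
      linear_combination h2b - h1b - v.2.1 * h
    exact Prod.ext h (Prod.ext e1 e2)
  · apply hvv'
    have hd : u.1 - u'.1 ≠ 0 := sub_ne_zero.mpr h
    have hv1 : v.1 = v'.1 := by
      have := mul_eq_zero.mp (show (v.1 - v'.1) * (u.1 - u'.1) = 0 by
        linear_combination h2a - h1a + h3a - h4a)
      rcases this with h' | h'
      · exact sub_eq_zero.mp h'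
      · exact absurd h' hd
    have hv2 : v.2.1 = v'.2.1 := by
      have : v.2.1 - v'.2.1 = (v.1 - v'.1) * u.1 := by linear_combination h1a - h3a
      rw [hv1] at this
      linear_combination this
    have hv3 : v.2.2 = v'.2.2 := by
      have : v.2.2 - v'.2.2 = (v.2.1 - v'.2.1) * u.1 := by linear_combination h1b - h3b
      rw [hv2] at this
      linear_combination this
    exact Prod.ext hv1 (Prod.ext hv2 hv3)
end

section
/- Let k ≥ 2 and let real numbers v_0, ..., v_{k−1} satisfy 2^{2(k−i−1)−1} n^{2(k−i)/(k(k+1))} ≤ v_i ≤ 2^{2(k−i−1)} n^{2(k−i)/(k(k+1))} for 0 ≤ i ≤ k−2 and n^{2/(k(k+1))} ≤ v_{k−1} ≤ 2n^{2/(k(k+1))}, where n ≥ 1. Then for every real t with 0 ≤ t ≤ n^{2/(k(k+1))}, the unique point x ∈ ℝ^k with x_{k−1} = t and x_i = v_i − v_{k−1}·x_{i+1} for i = k−2, ..., 0 satisfies 0 ≤ x_i ≤ 2^{2(k−i−1)} n^{2(k−i)/(k(k+1))} for all i. -/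
/-- Interval arithmetic for the modified Wenger construction: if `k ≥ 2`,
`n ≥ 1`, the coordinates of `v` satisfy
`2^{2(k−i−1)−1} n^{2(k−i)/(k(k+1))} ≤ v_i ≤ 2^{2(k−i−1)} n^{2(k−i)/(k(k+1))}`
for `i ≤ k−2` and `n^{2/(k(k+1))} ≤ v_{k−1} ≤ 2 n^{2/(k(k+1))}`, and
`0 ≤ t ≤ n^{2/(k(k+1))}`, then the point `x` determined by `x_{k−1} = t`
and the back-substitution `x_i = v_i − v_{k−1}·x_{i+1}` satisfies
`0 ≤ x_i ≤ 2^{2(k−i−1)} n^{2(k−i)/(k(k+1))}` for all `i`. -/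
theorem stmt_13 (k : ℕ) (hk : 2 ≤ k) (n : ℝ) (hn : 1 ≤ n)
    (v x : Fin k → ℝ) (t : ℝ)
    (hv : ∀ i : ℕ, ∀ hi : i + 1 < k,
      (2 : ℝ) ^ (2 * (k - i - 1) - 1) * n ^ ((2 * ((k : ℝ) - i)) / ((k : ℝ) * (k + 1)))
          ≤ v ⟨i, by omega⟩ ∧
        v ⟨i, by omega⟩
          ≤ (2 : ℝ) ^ (2 * (k - i - 1)) * n ^ ((2 * ((k : ℝ) - i)) / ((k : ℝ) * (k + 1))))
    (hvlast : n ^ ((2 : ℝ) / ((k : ℝ) * (k + 1))) ≤ v ⟨k - 1, by omega⟩ ∧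
      v ⟨k - 1, by omega⟩ ≤ 2 * n ^ ((2 : ℝ) / ((k : ℝ) * (k + 1))))
    (ht : 0 ≤ t ∧ t ≤ n ^ ((2 : ℝ) / ((k : ℝ) * (k + 1))))
    (hxlast : x ⟨k - 1, by omega⟩ = t)
    (hx : ∀ i : ℕ, ∀ hi : i + 1 < k,
      x ⟨i, by omega⟩ = v ⟨i, by omega⟩ - v ⟨k - 1, by omega⟩ * x ⟨i + 1, hi⟩) :
    ∀ i : Fin k, 0 ≤ x i ∧
      x i ≤ (2 : ℝ) ^ (2 * (k - (i : ℕ) - 1)) *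
        n ^ ((2 * ((k : ℝ) - (i : ℕ))) / ((k : ℝ) * (k + 1))) := by
  obtain ⟨ht0, ht1⟩ := ht
  obtain ⟨hvl, hvr⟩ := hvlast
  have hn0 : (0:ℝ) ≤ n := by linarith
  have hk' : (0:ℝ) < (k:ℝ) := by exact_mod_cast (by omega : 0 < k)
  set α : ℝ := n ^ ((2:ℝ)/((k:ℝ)*((k:ℝ)+1))) with hαdef
  have hα1 : (1:ℝ) ≤ α := Real.one_le_rpow hn (by positivity)
  have hα0 : (0:ℝ) ≤ α := by linarith
  have key : ∀ i : ℕ, i < k →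
      n ^ ((2*((k:ℝ)-i))/((k:ℝ)*((k:ℝ)+1))) = α ^ (k - i) := by
    intro i hi
    rw [hαdef, ← Real.rpow_natCast (n ^ ((2:ℝ)/((k:ℝ)*((k:ℝ)+1)))) (k - i),
      ← Real.rpow_mul hn0]
    congr 1
    have hcast : ((k - i : ℕ) : ℝ) = (k:ℝ) - i := by
      have := Nat.cast_sub hi.le (R := ℝ); linarith
    rw [hcast]
    field_simp
  have main : ∀ j : ℕ, ∀ i : ℕ, ∀ hik : i < k, k - 1 - i ≤ j →
      0 ≤ x ⟨i, hik⟩ ∧ x ⟨i, hik⟩ ≤ 2 ^ (2*(k-i-1)) * α ^ (k-i) := by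
    intro j
    induction j with
    | zero =>
      intro i hik hji
      have hieq : i = k - 1 := by omega
      subst hieq
      have h1 : k - (k-1) = 1 := by omega
      have h2 : 2 * (k - (k-1) - 1) = 0 := by omega
      rw [hxlast, h1]
      simpa using ⟨ht0, ht1⟩
    | succ j ih =>
      intro i hik hji
      by_cases hcase : k - 1 - i ≤ j
      · exact ih i hik hcase
      · have hi1 : i + 1 < k := by omega
        obtain ⟨hxl, hxr⟩ := ih (i+1) hi1 (by omega)
        obtain ⟨hv1, hv2⟩ := hv i hi1
        rw [key i (by omega)] at hv1 hv2
        rw [hx i hi1]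
        have e1 : k - (i+1) = k - i - 1 := by omega
        have e2 : 2 * (k - i - 1 - 1) = 2 * (k - i - 1) - 2 := by omega
        rw [e1, e2] at hxr
        -- bound the product
        have hvpos : 0 ≤ v ⟨k-1, by omega⟩ := le_trans hα0 hvl
        have hprod0 : 0 ≤ v ⟨k-1, by omega⟩ * x ⟨i+1, hi1⟩ := mul_nonneg hvpos hxl
        have hprod : v ⟨k-1, by omega⟩ * x ⟨i+1, hi1⟩
            ≤ (2*α) * (2 ^ (2*(k-i-1)-2) * α ^ (k-i-1)) := by
          apply mul_le_mul hvr hxr hxl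
          positivity
        have hgen : ∀ e m : ℕ, (2*α) * ((2:ℝ) ^ e * α ^ m) = 2 ^ (e+1) * α ^ (m+1) := by
          intro e m
          rw [pow_succ, pow_succ]
          ring
        rw [hgen] at hprod
        have h3 : 2*(k-i-1)-2+1 = 2*(k-i-1)-1 := by omega
        have h4 : (k-i-1) + 1 = k - i := by omega
        rw [h3, h4] at hprod
        constructor
        · linarith
        · linarith
  intro i
  obtain ⟨i, hi⟩ := i
  have := main (k-1-i) i hi le_rfl
  rw [show ((⟨i, hi⟩ : Fin k) : ℕ) = i from rfl, key i hi]
  exact this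
end
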